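/- arXiv:2105.11778 — 7 statements merged into one kernel-verified Lean document; each statement's English description precedes it below -/
import Mathlib

section
/- Let $(X,d)$ be a generalized complete metric space and $T:X\to X$ strictly contractive with constant $\Lambda<1$, and suppose $d(T^{k+1}x,T^k x)<\infty$ for some $x\in X$ and integer $k\ge 0$. Then $T$ has a unique fixed point $x^*$ in the set $X^* = \{y\in X : d(T^k x, y)<\infty\}$, and for every $y\in X^*$ one has $d(y,x^*)\le \frac{1}{1-\Lambda} d(Ty,y)$. -/
/-!
Banach's argument survives in an extended metric space as long as it starts from a point `z`
with `d z (T z) < ∞`: the iterates `T^[n] z` form a Cauchy sequence whose limit `y*` is a fixed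
point at finite distance from `z`. Two fixed points at finite distance satisfy `d a b ≤ Λ * d a b`,
hence coincide, and the estimate is `d y y* ≤ d y (T y) + Λ * d y y*` solved for `d y y*`, which
is legitimate because `d y y* ≤ d y z + d z y* < ∞`.
-/

open scoped ENNReal NNReal
open Function

noncomputable abbrev EMetricSpace.ofEDist {α : Type*} (edist : α → α → ℝ≥0∞)
    (edist_eq_zero : ∀ x y, edist x y = 0 ↔ x = y) (edist_comm : ∀ x y, edist x y = edist y x)
    (edist_triangle : ∀ x y z, edist x z ≤ edist x y + edist y z) : EMetricSpace α where
  __ := PseudoEMetricSpace.ofEDist edist (fun x ↦ (edist_eq_zero x x).2 rfl) edist_comm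
    edist_triangle
  eq_of_edist_eq_zero h := (edist_eq_zero _ _).1 h

theorem EMetric.completeSpace_of_forall_cauchy_exists_tendsto {α : Type*} [PseudoEMetricSpace α]
    (h : ∀ u : ℕ → α, (∀ ε > 0, ∃ N, ∀ m ≥ N, ∀ n ≥ N, edist (u m) (u n) < ε) →
      ∃ a, ∀ ε > 0, ∃ N, ∀ n ≥ N, edist (u n) a < ε) :
    CompleteSpace α :=
  EMetric.complete_of_cauchySeq_tendsto fun u hu ↦
    (h u (EMetric.cauchySeq_iff.1 hu)).imp fun _ ↦ EMetric.tendsto_atTop.2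

namespace ContractingWith

variable {α : Type*} [EMetricSpace α] [CompleteSpace α] {K : ℝ≥0} {f : α → α}

theorem edist_efixedPoint_ne_top (hf : ContractingWith K f) {x : α} (hx : edist x (f x) ≠ ∞)
    {y : α} (hxy : edist x y ≠ ∞) : edist y (efixedPoint f hf x hx) ≠ ∞ :=
  ((edist_triangle_left y _ x).trans_lt
    (ENNReal.add_lt_top.2 ⟨hxy.lt_top, hf.edist_efixedPoint_lt_top hx⟩)).ne

theorem eq_efixedPoint_of_edist_ne_top (hf : ContractingWith K f) {x : α}
    (hx : edist x (f x) ≠ ∞) {y : α} (hy : IsFixedPt f y) (hxy : edist x y ≠ ∞) :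
    y = efixedPoint f hf x hx :=
  (hf.eq_or_edist_eq_top_of_fixedPoints hy (hf.efixedPoint_isFixedPt hx)).resolve_right
    (hf.edist_efixedPoint_ne_top hx hxy)

theorem edist_efixedPoint_le_of_edist_ne_top (hf : ContractingWith K f) {x : α}
    (hx : edist x (f x) ≠ ∞) {y : α} (hxy : edist x y ≠ ∞) :
    edist y (efixedPoint f hf x hx) ≤ (1 - (K : ℝ≥0∞))⁻¹ * edist (f y) y := by
  rw [← ENNReal.div_eq_inv_mul, edist_comm (f y)]
  exact hf.edist_le_of_fixedPoint (hf.edist_efixedPoint_ne_top hx hxy)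
    (hf.efixedPoint_isFixedPt hx)

end ContractingWith

theorem diaz_margolis_uniqueness_estimate_general {X : Type*}
    (d : X → X → ℝ≥0∞)
    (hd_self : ∀ x y, d x y = 0 ↔ x = y)
    (hd_symm : ∀ x y, d x y = d y x)
    (hd_tri : ∀ x y z, d x z ≤ d x y + d y z)
    (hd_complete : ∀ u : ℕ → X,
      (∀ ε : ℝ≥0∞, 0 < ε → ∃ N, ∀ m ≥ N, ∀ n ≥ N, d (u m) (u n) < ε) →
      ∃ x : X, ∀ ε : ℝ≥0∞, 0 < ε → ∃ N, ∀ n ≥ N, d (u n) x < ε)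
    (T : X → X) (Λ : ℝ≥0∞) (hΛ : Λ < 1)
    (hT : ∀ x y, d (T x) (T y) ≤ Λ * d x y)
    (k : ℕ) (x : X) (hk : d (T^[k+1] x) (T^[k] x) < ⊤) :
    ∃ xs : X, (T xs = xs ∧ d (T^[k] x) xs < ⊤) ∧
      (∀ y : X, T y = y → d (T^[k] x) y < ⊤ → y = xs) ∧
      (∀ y : X, d (T^[k] x) y < ⊤ → d y xs ≤ (1 - Λ)⁻¹ * d (T y) y) := by
  let := EMetricSpace.ofEDist d hd_self hd_symm hd_tri
  have : CompleteSpace X := EMetric.completeSpace_of_forall_cauchy_exists_tendsto hd_complete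
  lift Λ to ℝ≥0 using hΛ.ne_top
  have hTc : ContractingWith Λ T := ⟨ENNReal.coe_lt_one_iff.1 hΛ, hT⟩
  have hz : edist (T^[k] x) (T (T^[k] x)) ≠ ∞ := by
    rw [← iterate_succ_apply' T k x, edist_comm]
    exact hk.ne
  exact ⟨ContractingWith.efixedPoint T hTc _ hz, ⟨hTc.efixedPoint_isFixedPt hz, hTc.edist_efixedPoint_lt_top hz⟩,
    fun y hy hzy ↦ hTc.eq_efixedPoint_of_edist_ne_top hz hy hzy.ne,
    fun y hzy ↦ hTc.edist_efixedPoint_le_of_edist_ne_top hz hzy.ne⟩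

/-- Diaz–Margolis fixed point alternative, parts (b) and (c): `T` has a unique
fixed point `x*` in `X* = {y : d (T^[k] x) y < ∞}`, and every `y ∈ X*`
satisfies `d y x* ≤ (1 - Λ)⁻¹ * d (T y) y`. -/
theorem diaz_margolis_uniqueness_estimate {X : Type*} [Nonempty X]
    (d : X → X → ℝ≥0∞)
    (hd_self : ∀ x y, d x y = 0 ↔ x = y)
    (hd_symm : ∀ x y, d x y = d y x)
    (hd_tri : ∀ x y z, d x z ≤ d x y + d y z)
    (hd_complete : ∀ u : ℕ → X,
      (∀ ε : ℝ≥0∞, 0 < ε → ∃ N, ∀ m ≥ N, ∀ n ≥ N, d (u m) (u n) < ε) →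
      ∃ x : X, ∀ ε : ℝ≥0∞, 0 < ε → ∃ N, ∀ n ≥ N, d (u n) x < ε)
    (T : X → X) (Λ : ℝ≥0∞) (hΛ : Λ < 1)
    (hT : ∀ x y, d (T x) (T y) ≤ Λ * d x y)
    (k : ℕ) (x : X) (hk : d (T^[k+1] x) (T^[k] x) < ⊤) :
    ∃ xs : X, (T xs = xs ∧ d (T^[k] x) xs < ⊤) ∧
      (∀ y : X, T y = y → d (T^[k] x) y < ⊤ → y = xs) ∧
      (∀ y : X, d (T^[k] x) y < ⊤ → d y xs ≤ (1 - Λ)⁻¹ * d (T y) y) :=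
  diaz_margolis_uniqueness_estimate_general d hd_self hd_symm hd_tri hd_complete T Λ hΛ hT k x hk
end

section
/- Let $I=[t_0,t_0+r]$ and let $f:I\times\mathbb{R}\to\mathbb{R}$ be continuous and satisfy $|f(t,y_1)-f(t,y_2)|\le L|y_1-y_2|$ for all $t\in I$, $y_1,y_2\in\mathbb{R}$, with $L>0$. Let $\varphi:I\to(0,\infty)$ be a nondecreasing continuous function and let $y:I\to\mathbb{R}$ be continuous with $|y(t)-\int_{t_0}^{t} f(s,y(s))\,ds| \le \varphi(t)$ for all $t\in I$. Then for every fixed $\eta>L$ there exists a unique continuous $y_0:I\to\mathbb{R}$ satisfying $y_0(t)=\int_{t_0}^{t} f(s,y_0(s))\,ds$ for all $t\in I$ and $|y(t)-y_0(t)|\le \frac{\varphi(t)\,e^{\eta r}}{1-L/\eta}$ for all $t\in I$. -/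
/-!
The Volterra operator `T u t = ∫_{t₀}^t f(s, u s) ds` is a contraction with constant `L / η`
for the Bielecki-type metric `d(u, v) = sup_t |u t - v t| / ψ t`, `ψ t = φ t * e^{η (t - t₀)}`:
since `φ` is nondecreasing, `η ∫_{t₀}^t ψ ≤ ψ t`, so
`|T u - T v| ≤ L ∫ |u - v| ≤ (L / η) d(u, v) ψ`.
Banach's fixed point theorem then gives the unique solution `y₀`, and
`d(y, y₀) ≤ d(y, T y) / (1 - L / η) ≤ 1 / (1 - L / η)` because `|y - T y| ≤ φ ≤ ψ`.
-/

open Set intervalIntegral MeasureTheory Real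
open scoped NNReal

noncomputable def volterraOp (f : ℝ → ℝ → ℝ) (a : ℝ) (u : ℝ → ℝ) (t : ℝ) : ℝ :=
  ∫ s in a..t, f s (u s)

section Volterra

variable {f : ℝ → ℝ → ℝ} {a b L : ℝ} {u v ψ : ℝ → ℝ}

lemma volterraOp_congr (huv : EqOn u v (Icc a b)) {t : ℝ} (ht : t ∈ Icc a b) :
    volterraOp f a u t = volterraOp f a v t := by
  refine integral_congr fun s hs => ?_
  rw [uIcc_of_le ht.1] at hs
  simp only [huv ⟨hs.1, hs.2.trans ht.2⟩]

lemma continuousOn_volterra_integrand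
    (hf : ContinuousOn (fun p : ℝ × ℝ => f p.1 p.2) (Icc a b ×ˢ univ))
    (hu : ContinuousOn u (Icc a b)) : ContinuousOn (fun s => f s (u s)) (Icc a b) :=
  hf.comp (continuousOn_id.prodMk hu) fun _ hs => ⟨hs, mem_univ _⟩

lemma continuousOn_volterraOp (hab : a ≤ b)
    (hf : ContinuousOn (fun p : ℝ × ℝ => f p.1 p.2) (Icc a b ×ˢ univ))
    (hu : ContinuousOn u (Icc a b)) : ContinuousOn (volterraOp f a u) (Icc a b) := by
  have := continuousOn_primitive_interval (μ := volume)
    ((continuousOn_volterra_integrand hf hu).integrableOn_Icc.mono_set (uIcc_of_le hab).le)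
  rwa [uIcc_of_le hab] at this

lemma abs_volterraOp_sub_le_of_weight
    (hf : ContinuousOn (fun p : ℝ × ℝ => f p.1 p.2) (Icc a b ×ˢ univ))
    (hlip : ∀ t ∈ Icc a b, ∀ y₁ y₂ : ℝ, |f t y₁ - f t y₂| ≤ L * |y₁ - y₂|)
    (hL : 0 ≤ L) (hψc : ContinuousOn ψ (Icc a b)) {K C : ℝ}
    (hψint : ∀ t ∈ Icc a b, L * ∫ s in a..t, ψ s ≤ K * ψ t)
    (hu : ContinuousOn u (Icc a b)) (hv : ContinuousOn v (Icc a b))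
    (hC : 0 ≤ C) (huv : ∀ s ∈ Icc a b, |u s - v s| ≤ C * ψ s) {t : ℝ} (ht : t ∈ Icc a b) :
    |volterraOp f a u t - volterraOp f a v t| ≤ K * C * ψ t := by
  have hsub : Icc a t ⊆ Icc a b := Icc_subset_Icc_right ht.2
  have hint {g : ℝ → ℝ} (hg : ContinuousOn g (Icc a b)) : IntervalIntegrable g volume a t :=
    (hg.mono (uIcc_of_le ht.1 ▸ hsub)).intervalIntegrable
  have hfu := continuousOn_volterra_integrand hf hu
  have hfv := continuousOn_volterra_integrand hf hv
  calc |volterraOp f a u t - volterraOp f a v t|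
      = |∫ s in a..t, (f s (u s) - f s (v s))| := by
        rw [volterraOp, volterraOp, integral_sub (hint hfu) (hint hfv)]
    _ ≤ ∫ s in a..t, |f s (u s) - f s (v s)| := abs_integral_le_integral_abs ht.1
    _ ≤ ∫ s in a..t, L * (C * ψ s) := by
        refine integral_mono_on ht.1 (hint (hfu.sub hfv).abs)
          (hint (continuousOn_const.mul (continuousOn_const.mul hψc))) fun s hs => ?_
        exact (hlip s (hsub hs) _ _).trans (mul_le_mul_of_nonneg_left (huv s (hsub hs)) hL)
    _ = C * (L * ∫ s in a..t, ψ s) := by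
        rw [intervalIntegral.integral_const_mul, intervalIntegral.integral_const_mul]; ring
    _ ≤ C * (K * ψ t) := mul_le_mul_of_nonneg_left (hψint t ht) hC
    _ = K * C * ψ t := by ring

end Volterra

section Weighted

variable {a b : ℝ} {ψ : ℝ → ℝ}

noncomputable def weightedExtend (hab : a ≤ b) (ψ : ℝ → ℝ) (w : C(Icc a b, ℝ)) (t : ℝ) : ℝ :=
  ψ t * IccExtend hab w t

noncomputable def weightedRestrict (g : ℝ → ℝ) (hg : ContinuousOn g (Icc a b))
    (hψc : ContinuousOn ψ (Icc a b)) (hψ : ∀ t ∈ Icc a b, 0 < ψ t) : C(Icc a b, ℝ) :=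
  ⟨(Icc a b).domRestrict fun t => g t / ψ t,
    (hg.div hψc fun t ht => (hψ t ht).ne').domRestrict⟩

lemma continuousOn_weightedExtend (hab : a ≤ b) (hψc : ContinuousOn ψ (Icc a b))
    (w : C(Icc a b, ℝ)) : ContinuousOn (weightedExtend hab ψ w) (Icc a b) :=
  hψc.mul (ContinuousMap.IccExtend hab w).continuous.continuousOn

lemma abs_weightedExtend_sub_le (hab : a ≤ b) (hψ : ∀ t ∈ Icc a b, 0 < ψ t)
    (w v : C(Icc a b, ℝ)) {t : ℝ} (ht : t ∈ Icc a b) :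
    |weightedExtend hab ψ w t - weightedExtend hab ψ v t| ≤ dist w v * ψ t := by
  rw [weightedExtend, weightedExtend, IccExtend_of_mem hab _ ht, IccExtend_of_mem hab _ ht,
    ← mul_sub, abs_mul, abs_of_pos (hψ t ht), mul_comm, ← Real.dist_eq]
  exact mul_le_mul_of_nonneg_right (ContinuousMap.dist_apply_le_dist _) (hψ t ht).le

lemma weightedExtend_weightedRestrict (hab : a ≤ b) {g : ℝ → ℝ} (hg : ContinuousOn g (Icc a b))
    (hψc : ContinuousOn ψ (Icc a b)) (hψ : ∀ t ∈ Icc a b, 0 < ψ t) :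
    EqOn (weightedExtend hab ψ (weightedRestrict g hg hψc hψ)) g (Icc a b) := fun t ht => by
  rw [weightedExtend, IccExtend_of_mem hab _ ht]
  exact mul_div_cancel₀ _ (hψ t ht).ne'

lemma weightedRestrict_congr {g h : ℝ → ℝ} (hgh : EqOn g h (Icc a b))
    (hg : ContinuousOn g (Icc a b)) (hh : ContinuousOn h (Icc a b))
    (hψc : ContinuousOn ψ (Icc a b)) (hψ : ∀ t ∈ Icc a b, 0 < ψ t) :
    weightedRestrict g hg hψc hψ = weightedRestrict h hh hψc hψ :=
  ContinuousMap.ext fun t => congrArg (· / ψ t) (hgh t.2)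

lemma dist_weightedRestrict_le {g h : ℝ → ℝ} (hg : ContinuousOn g (Icc a b))
    (hh : ContinuousOn h (Icc a b)) (hψc : ContinuousOn ψ (Icc a b))
    (hψ : ∀ t ∈ Icc a b, 0 < ψ t) {C : ℝ} (hC : 0 ≤ C)
    (hgh : ∀ t ∈ Icc a b, |g t - h t| ≤ C * ψ t) :
    dist (weightedRestrict g hg hψc hψ) (weightedRestrict h hh hψc hψ) ≤ C := by
  refine (ContinuousMap.dist_le hC).2 fun ⟨t, ht⟩ => ?_
  rw [Real.dist_eq]
  change |g t / ψ t - h t / ψ t| ≤ C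
  rw [← sub_div, abs_div, abs_of_pos (hψ t ht), div_le_iff₀ (hψ t ht)]
  exact hgh t ht

end Weighted

section Contraction

variable {f : ℝ → ℝ → ℝ} {a b L : ℝ} {ψ : ℝ → ℝ}

/-- The Volterra operator conjugated by the weight `ψ`: it contracts the sup metric exactly
when the Volterra operator contracts the Bielecki-type metric `sup |u - v| / ψ`. -/
noncomputable def weightedVolterra (hab : a ≤ b)
    (hf : ContinuousOn (fun p : ℝ × ℝ => f p.1 p.2) (Icc a b ×ˢ univ))
    (hψc : ContinuousOn ψ (Icc a b)) (hψ : ∀ t ∈ Icc a b, 0 < ψ t) (w : C(Icc a b, ℝ)) :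
    C(Icc a b, ℝ) :=
  weightedRestrict (volterraOp f a (weightedExtend hab ψ w))
    (continuousOn_volterraOp hab hf (continuousOn_weightedExtend hab hψc w)) hψc hψ

lemma weightedVolterra_weightedRestrict (hab : a ≤ b)
    (hf : ContinuousOn (fun p : ℝ × ℝ => f p.1 p.2) (Icc a b ×ˢ univ))
    (hψc : ContinuousOn ψ (Icc a b)) (hψ : ∀ t ∈ Icc a b, 0 < ψ t)
    {y : ℝ → ℝ} (hy : ContinuousOn y (Icc a b)) :
    weightedVolterra hab hf hψc hψ (weightedRestrict y hy hψc hψ) =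
      weightedRestrict (volterraOp f a y) (continuousOn_volterraOp hab hf hy) hψc hψ :=
  weightedRestrict_congr
    (fun _ ht => volterraOp_congr (weightedExtend_weightedRestrict hab hy hψc hψ) ht) _ _ _ _

lemma contractingWith_weightedVolterra (hab : a ≤ b)
    (hf : ContinuousOn (fun p : ℝ × ℝ => f p.1 p.2) (Icc a b ×ˢ univ))
    (hlip : ∀ t ∈ Icc a b, ∀ y₁ y₂ : ℝ, |f t y₁ - f t y₂| ≤ L * |y₁ - y₂|) (hL : 0 ≤ L)
    (hψc : ContinuousOn ψ (Icc a b)) (hψ : ∀ t ∈ Icc a b, 0 < ψ t) {K : ℝ≥0} (hK : K < 1)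
    (hψint : ∀ t ∈ Icc a b, L * ∫ s in a..t, ψ s ≤ K * ψ t) :
    ContractingWith K (weightedVolterra hab hf hψc hψ) := by
  refine ⟨hK, LipschitzWith.of_dist_le_mul fun w v => ?_⟩
  refine dist_weightedRestrict_le _ _ _ _ (by positivity) fun t ht => ?_
  exact abs_volterraOp_sub_le_of_weight hf hlip hL hψc hψint
    (continuousOn_weightedExtend hab hψc w) (continuousOn_weightedExtend hab hψc v)
    dist_nonneg (fun s hs => abs_weightedExtend_sub_le hab hψ w v hs) ht

theorem exists_volterra_solution_near_of_weight (hab : a ≤ b)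
    (hf : ContinuousOn (fun p : ℝ × ℝ => f p.1 p.2) (Icc a b ×ˢ univ))
    (hlip : ∀ t ∈ Icc a b, ∀ y₁ y₂ : ℝ, |f t y₁ - f t y₂| ≤ L * |y₁ - y₂|) (hL : 0 ≤ L)
    (hψc : ContinuousOn ψ (Icc a b)) (hψ : ∀ t ∈ Icc a b, 0 < ψ t) {K : ℝ≥0} (hK : K < 1)
    (hψint : ∀ t ∈ Icc a b, L * ∫ s in a..t, ψ s ≤ K * ψ t)
    {y : ℝ → ℝ} (hy : ContinuousOn y (Icc a b))
    (hyψ : ∀ t ∈ Icc a b, |y t - volterraOp f a y t| ≤ ψ t) :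
    ∃ y₀ : ℝ → ℝ, ContinuousOn y₀ (Icc a b) ∧ EqOn y₀ (volterraOp f a y₀) (Icc a b) ∧
      ∀ t ∈ Icc a b, |y t - y₀ t| ≤ ψ t / (1 - K) := by
  have hW := contractingWith_weightedVolterra hab hf hlip hL hψc hψ hK hψint
  set w₀ := ContractingWith.fixedPoint _ hW
  have hw₀ : weightedVolterra hab hf hψc hψ w₀ = w₀ := ContractingWith.fixedPoint_isFixedPt hW
  refine ⟨weightedExtend hab ψ w₀, continuousOn_weightedExtend hab hψc w₀, fun t ht => ?_,
    fun t ht => ?_⟩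
  · conv_lhs => rw [← hw₀]
    exact weightedExtend_weightedRestrict hab _ hψc hψ ht
  · have hdist : dist (weightedRestrict y hy hψc hψ) w₀ ≤ 1 / (1 - K) := by
      refine (hW.dist_fixedPoint_le _).trans (div_le_div_of_nonneg_right ?_ ?_)
      · rw [weightedVolterra_weightedRestrict]
        exact dist_weightedRestrict_le _ _ _ _ zero_le_one fun t ht =>
          (one_mul (ψ t)).symm ▸ hyψ t ht
      · exact sub_nonneg.2 (by exact_mod_cast hK.le)
    calc |y t - weightedExtend hab ψ w₀ t|
        = |weightedExtend hab ψ (weightedRestrict y hy hψc hψ) t - weightedExtend hab ψ w₀ t| := by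
          rw [weightedExtend_weightedRestrict hab hy hψc hψ ht]
      _ ≤ 1 / (1 - K) * ψ t := abs_weightedExtend_sub_le hab hψ _ _ ht |>.trans
          (mul_le_mul_of_nonneg_right hdist (hψ t ht).le)
      _ = ψ t / (1 - K) := by ring

theorem eqOn_of_volterra_solutions_of_weight (hab : a ≤ b)
    (hf : ContinuousOn (fun p : ℝ × ℝ => f p.1 p.2) (Icc a b ×ˢ univ))
    (hlip : ∀ t ∈ Icc a b, ∀ y₁ y₂ : ℝ, |f t y₁ - f t y₂| ≤ L * |y₁ - y₂|) (hL : 0 ≤ L)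
    (hψc : ContinuousOn ψ (Icc a b)) (hψ : ∀ t ∈ Icc a b, 0 < ψ t) {K : ℝ≥0} (hK : K < 1)
    (hψint : ∀ t ∈ Icc a b, L * ∫ s in a..t, ψ s ≤ K * ψ t)
    {z₁ z₂ : ℝ → ℝ} (hz₁ : ContinuousOn z₁ (Icc a b)) (hz₂ : ContinuousOn z₂ (Icc a b))
    (hz₁V : EqOn z₁ (volterraOp f a z₁) (Icc a b))
    (hz₂V : EqOn z₂ (volterraOp f a z₂) (Icc a b)) : EqOn z₁ z₂ (Icc a b) := by
  have hW := contractingWith_weightedVolterra hab hf hlip hL hψc hψ hK hψint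
  have hfix {z : ℝ → ℝ} (hz : ContinuousOn z (Icc a b))
      (hzV : EqOn z (volterraOp f a z) (Icc a b)) :
      Function.IsFixedPt (weightedVolterra hab hf hψc hψ) (weightedRestrict z hz hψc hψ) := by
    rw [Function.IsFixedPt, weightedVolterra_weightedRestrict]
    exact weightedRestrict_congr hzV.symm _ _ _ _
  have h := hW.fixedPoint_unique' (hfix hz₁ hz₁V) (hfix hz₂ hz₂V)
  intro t ht
  rw [← weightedExtend_weightedRestrict hab hz₁ hψc hψ ht,
    ← weightedExtend_weightedRestrict hab hz₂ hψc hψ ht, h]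

end Contraction

lemma mul_integral_mul_exp_le {φ : ℝ → ℝ} {a t η : ℝ} (hat : a ≤ t) (hη : 0 < η)
    (hφ : MonotoneOn φ (Icc a t)) (hφt : 0 ≤ φ t) :
    η * ∫ s in a..t, φ s * exp (η * (s - a)) ≤ φ t * exp (η * (t - a)) := by
  have hexp_cont : Continuous fun s => exp (η * (s - a)) := by fun_prop
  have hexp : η * ∫ s in a..t, exp (η * (s - a)) = exp (η * (t - a)) - 1 := by
    rw [integral_eq_sub_of_hasDerivAt (f := fun s => exp (η * (s - a)) / η)
      (fun s _ => ?_) (hexp_cont.intervalIntegrable _ _)]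
    · field_simp; simp
    · refine ((((hasDerivAt_id s).sub_const a).const_mul η).exp.div_const η).congr_deriv ?_
      field_simp; rfl
  have hmono : ∫ s in a..t, φ s * exp (η * (s - a)) ≤ ∫ s in a..t, φ t * exp (η * (s - a)) := by
    have hφint : IntervalIntegrable φ volume a t :=
      MonotoneOn.intervalIntegrable (by rwa [uIcc_of_le hat])
    refine integral_mono_on hat (hφint.mul_continuousOn hexp_cont.continuousOn)
      ((continuous_const.mul hexp_cont).intervalIntegrable _ _) fun s hs => ?_
    exact mul_le_mul_of_nonneg_right (hφ hs ⟨hat, le_rfl⟩ hs.2) (exp_pos _).le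
  calc η * ∫ s in a..t, φ s * exp (η * (s - a))
      ≤ φ t * (η * ∫ s in a..t, exp (η * (s - a))) := by
        rw [intervalIntegral.integral_const_mul] at hmono
        nlinarith
    _ ≤ φ t * exp (η * (t - a)) := by
        rw [hexp]; nlinarith

/-- Hyers–Ulam–Rassias stability of `y(t) = ∫_{t₀}^t f(s, y(s)) ds` on
`I = [t₀, t₀+r]`: if `f` is continuous, `L`-Lipschitz in its second variable,
and `y` is an approximate solution with error bounded by a nondecreasing
positive continuous `φ`, then for every `η > L` there is a unique continuous
exact solution `y₀` with `|y t - y₀ t| ≤ φ t · e^{ηr} / (1 - L/η)` on `I`. -/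
theorem volterra_HUR_stability
    (t₀ r L η : ℝ) (hr : 0 < r) (hL : 0 < L) (hη : L < η)
    (f : ℝ → ℝ → ℝ)
    (hf : ContinuousOn (fun p : ℝ × ℝ => f p.1 p.2) (Set.Icc t₀ (t₀ + r) ×ˢ Set.univ))
    (hlip : ∀ t ∈ Set.Icc t₀ (t₀ + r), ∀ y₁ y₂ : ℝ,
      |f t y₁ - f t y₂| ≤ L * |y₁ - y₂|)
    (φ : ℝ → ℝ) (hφc : ContinuousOn φ (Set.Icc t₀ (t₀ + r)))
    (hφmono : MonotoneOn φ (Set.Icc t₀ (t₀ + r)))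
    (hφpos : ∀ t ∈ Set.Icc t₀ (t₀ + r), 0 < φ t)
    (y : ℝ → ℝ) (hy : ContinuousOn y (Set.Icc t₀ (t₀ + r)))
    (happrox : ∀ t ∈ Set.Icc t₀ (t₀ + r),
      |y t - ∫ s in t₀..t, f s (y s)| ≤ φ t) :
    ∃ y₀ : ℝ → ℝ,
      (ContinuousOn y₀ (Set.Icc t₀ (t₀ + r)) ∧
        (∀ t ∈ Set.Icc t₀ (t₀ + r), y₀ t = ∫ s in t₀..t, f s (y₀ s)) ∧
        (∀ t ∈ Set.Icc t₀ (t₀ + r),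
          |y t - y₀ t| ≤ φ t * Real.exp (η * r) / (1 - L / η))) ∧
      (∀ z : ℝ → ℝ,
        ContinuousOn z (Set.Icc t₀ (t₀ + r)) →
        (∀ t ∈ Set.Icc t₀ (t₀ + r), z t = ∫ s in t₀..t, f s (z s)) →
        (∀ t ∈ Set.Icc t₀ (t₀ + r),
          |y t - z t| ≤ φ t * Real.exp (η * r) / (1 - L / η)) →
        ∀ t ∈ Set.Icc t₀ (t₀ + r), z t = y₀ t) := by
  have hab : t₀ ≤ t₀ + r := by linarith
  have hη₀ : 0 < η := hL.trans hη
  set ψ : ℝ → ℝ := fun t => φ t * exp (η * (t - t₀))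
  have hψc : ContinuousOn ψ (Icc t₀ (t₀ + r)) := hφc.mul (by fun_prop)
  have hψ : ∀ t ∈ Icc t₀ (t₀ + r), 0 < ψ t := fun t ht => mul_pos (hφpos t ht) (exp_pos _)
  have hK : (L / η).toNNReal < 1 := by
    rw [Real.toNNReal_lt_one, div_lt_one hη₀]; exact hη
  have hKcoe : ((L / η).toNNReal : ℝ) = L / η := Real.coe_toNNReal _ (by positivity)
  have hψint : ∀ t ∈ Icc t₀ (t₀ + r), L * ∫ s in t₀..t, ψ s ≤ (L / η).toNNReal * ψ t :=
    fun t ht => by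
      rw [hKcoe, div_mul_eq_mul_div, le_div_iff₀ hη₀, mul_assoc, mul_comm _ η]
      exact mul_le_mul_of_nonneg_left (mul_integral_mul_exp_le ht.1 hη₀
        (hφmono.mono (Icc_subset_Icc_right ht.2)) (hφpos t ht).le) hL.le
  have hψ_le : ∀ t ∈ Icc t₀ (t₀ + r), ψ t / (1 - L / η) ≤ φ t * exp (η * r) / (1 - L / η) :=
    fun t ht => div_le_div_of_nonneg_right (mul_le_mul_of_nonneg_left
      (exp_le_exp.2 (by nlinarith [ht.2])) (hφpos t ht).le)
      (sub_nonneg.2 ((div_le_one hη₀).2 hη.le))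
  obtain ⟨y₀, hy₀c, hy₀V, hy₀y⟩ := exists_volterra_solution_near_of_weight hab hf hlip hL.le hψc
    hψ hK hψint hy fun t ht => (happrox t ht).trans
      (le_mul_of_one_le_right (hφpos t ht).le (one_le_exp (by nlinarith [ht.1])))
  refine ⟨y₀, ⟨hy₀c, hy₀V, fun t ht => ?_⟩, fun z hzc hzV _ =>
    eqOn_of_volterra_solutions_of_weight hab hf hlip hL.le hψc hψ hK hψint hzc hy₀c hzV hy₀V⟩
  exact (hy₀y t ht).trans (by rw [hKcoe]; exact hψ_le t ht)
end

section
/- Let $I=[t_0,t_0+r]$ and let $f:I\times I\times\mathbb{R}\to\mathbb{R}$ be continuous and satisfy $|f(t,s,z_1)-f(t,s,z_2)|\le L|z_1-z_2|$ for all $t,s\in I$, $z_1,z_2\in\mathbb{R}$, with $L>0$. Let $\varphi:I\to(0,\infty)$ be nondecreasing continuous and let $y:I\to\mathbb{R}$ be continuous with $|y(t)-\int_{t_0}^{t} f(t,s,y(s))\,ds|\le\varphi(t)$ for all $t\in I$. Then for every fixed $\eta>L$ there exists a unique continuous $y_0:I\to\mathbb{R}$ with $y_0(t)=\int_{t_0}^{t}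 f(t,s,y_0(s))\,ds$ and $|y(t)-y_0(t)|\le \frac{\varphi(t)\,e^{\eta r}}{1-L/\eta}$ for all $t\in I$. -/
/-!
Extending the kernel continuously off `I × I`, the Volterra operator conjugated by a Bielecki
weight `exp (λ (t - t₀))` with `λ > L` is a contraction of `C(I, ℝ)`; its fixed point is the
solution `y₀`. For continuous `z` the Lipschitz bound gives
`|z t - y₀ t| ≤ |z t - ∫ f (t, s, z s)| + L ∫ |z - y₀|`, so the integral Gronwall inequality yields
`|z t - y₀ t| ≤ ψ t exp (L (t - t₀))` whenever the defect of `z` is bounded by a nondecreasing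
`ψ`. With `ψ = φ` this is below the stated bound, and with `ψ = 0` it gives uniqueness.
-/

open Set Real

theorem gronwallBound_zero_mul_add {K ε : ℝ} (x : ℝ) :
    ε + K * gronwallBound 0 K ε x = ε * exp (K * x) := by
  rcases eq_or_ne K 0 with rfl | hK
  · simp
  · rw [gronwallBound_of_K_ne_0 hK]
    field_simp
    ring

theorem le_mul_exp_of_le_add_mul_integral {d ψ : ℝ → ℝ} {a b K : ℝ} (hK : 0 ≤ K)
    (hd : ContinuousOn d (Icc a b)) (hψ : MonotoneOn ψ (Icc a b))
    (h : ∀ t ∈ Icc a b, d t ≤ ψ t + K * ∫ s in a..t, d s) :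
    ∀ t ∈ Icc a b, d t ≤ ψ t * exp (K * (t - a)) := by
  -- The differential Gronwall bound for the primitive `D`, since `D' = d ≤ ψ T + K * D`
  -- on `[a, T]` by monotonicity of `ψ`.
  intro T hT
  set D : ℝ → ℝ := fun t => ∫ s in a..t, d s
  have hIcc : Icc a T ⊆ Icc a b := Icc_subset_Icc_right hT.2
  have hD_deriv : ∀ t ∈ Icc a b, HasDerivWithinAt D (d t) (Icc a b) t := by
    intro t ht
    have := Fact.mk ht -- provides the `FTCFilter` instance for `Icc a b`
    exact intervalIntegral.integral_hasDerivWithinAt_right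
      ((hd.mono (Icc_subset_Icc_right ht.2)).intervalIntegrable_of_Icc ht.1)
      (hd.stronglyMeasurableAtFilter_nhdsWithin measurableSet_Icc t) (hd t ht)
  have hD_le : ∀ t ∈ Icc a T, D t ≤ gronwallBound 0 K (ψ T) (t - a) := by
    refine le_gronwallBound_of_liminf_deriv_right_le (f' := d)
      (fun t ht => (hD_deriv t (hIcc ht)).continuousWithinAt.mono hIcc)
      (fun t ht r hr => ?_) (by simp [D]) (fun t ht => ?_)
    · exact ((hD_deriv t (hIcc (Ico_subset_Icc_self ht))).mono_of_mem_nhdsWithin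
        (Icc_mem_nhdsGE_of_mem ⟨ht.1, ht.2.trans_le hT.2⟩)).liminf_right_slope_le hr
    · have ht' := hIcc (Ico_subset_Icc_self ht)
      linarith [h t ht', hψ ht' hT ht.2.le]
  calc d T ≤ ψ T + K * D T := h T hT
    _ ≤ ψ T + K * gronwallBound 0 K (ψ T) (T - a) := by
        gcongr; exact hD_le T (right_mem_Icc.2 hT.1)
    _ = ψ T * exp (K * (T - a)) := gronwallBound_zero_mul_add _

theorem integral_exp_mul_sub {η : ℝ} (hη : η ≠ 0) (a t : ℝ) :
    ∫ s in a..t, exp (η * (s - a)) = (exp (η * (t - a)) - 1) / η := by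
  simp only [mul_sub, intervalIntegral.integral_comp_mul_sub _ hη, integral_exp, sub_self,
    exp_zero, smul_eq_mul]
  field_simp

noncomputable def volterraIntegral (g : ℝ → ℝ → ℝ → ℝ) (a : ℝ) (y : ℝ → ℝ) (t : ℝ) : ℝ :=
  ∫ s in a..t, g t s (y s)

section Volterra

variable {g : ℝ → ℝ → ℝ → ℝ} {a b K : ℝ}

theorem continuous_volterraIntegral (hg : Continuous fun p : ℝ × ℝ × ℝ => g p.1 p.2.1 p.2.2)
    {y : ℝ → ℝ} (hy : Continuous y) : Continuous (volterraIntegral g a y) :=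
  intervalIntegral.continuous_parametric_intervalIntegral_of_continuous
    (f := fun t s => g t s (y s))
    (hg.comp (continuous_fst.prodMk (continuous_snd.prodMk (hy.comp continuous_snd))))
    continuous_id

theorem abs_volterraIntegral_sub_le (hg : Continuous fun p : ℝ × ℝ × ℝ => g p.1 p.2.1 p.2.2)
    (hlip : ∀ t s z₁ z₂, |g t s z₁ - g t s z₂| ≤ K * |z₁ - z₂|) {y z : ℝ → ℝ} {t : ℝ}
    (hat : a ≤ t) (hy : ContinuousOn y (Icc a t)) (hz : ContinuousOn z (Icc a t)) :
    |volterraIntegral g a y t - volterraIntegral g a z t| ≤ K * ∫ s in a..t, |y s - z s| := by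
  have hcomp : ∀ {x : ℝ → ℝ}, ContinuousOn x (Icc a t) →
      ContinuousOn (fun s => g t s (x s)) (Icc a t) := fun hx =>
    hg.comp_continuousOn (continuousOn_const.prodMk (continuousOn_id.prodMk hx))
  rw [volterraIntegral, volterraIntegral, ← intervalIntegral.integral_sub
    ((hcomp hy).intervalIntegrable_of_Icc hat) ((hcomp hz).intervalIntegrable_of_Icc hat),
    ← intervalIntegral.integral_const_mul]
  refine (intervalIntegral.abs_integral_le_integral_abs hat).trans
    (intervalIntegral.integral_mono_on hat ?_ ?_ fun s _ => hlip t s (y s) (z s))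
  · exact (((hcomp hy).sub (hcomp hz)).abs).intervalIntegrable_of_Icc hat
  · exact (continuousOn_const.mul (hy.sub hz).abs).intervalIntegrable_of_Icc hat

theorem abs_volterraIntegral_sub_le_of_abs_sub_le_exp
    (hg : Continuous fun p : ℝ × ℝ × ℝ => g p.1 p.2.1 p.2.2) (hK : 0 ≤ K)
    (hlip : ∀ t s z₁ z₂, |g t s z₁ - g t s z₂| ≤ K * |z₁ - z₂|) {y z : ℝ → ℝ} {t η M : ℝ}
    (hη : 0 < η) (hat : a ≤ t) (hy : Continuous y) (hz : Continuous z)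
    (h : ∀ s ∈ Icc a t, |y s - z s| ≤ M * exp (η * (s - a))) :
    |volterraIntegral g a y t - volterraIntegral g a z t| ≤ K / η * M * exp (η * (t - a)) := by
  have hM : 0 ≤ M := by simpa using (abs_nonneg _).trans (h a ⟨le_rfl, hat⟩)
  calc |volterraIntegral g a y t - volterraIntegral g a z t|
      ≤ K * ∫ s in a..t, |y s - z s| :=
        abs_volterraIntegral_sub_le hg hlip hat hy.continuousOn hz.continuousOn
    _ ≤ K * ∫ s in a..t, M * exp (η * (s - a)) := by
        gcongr
        exact intervalIntegral.integral_mono_on hat ((hy.sub hz).abs.intervalIntegrable _ _)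
          ((by fun_prop : Continuous fun s => M * exp (η * (s - a))).intervalIntegrable _ _) h
    _ = K / η * M * (exp (η * (t - a)) - 1) := by
        rw [intervalIntegral.integral_const_mul, integral_exp_mul_sub hη.ne']
        ring
    _ ≤ K / η * M * exp (η * (t - a)) := by
        gcongr
        linarith

theorem exists_continuous_volterraIntegral_eq
    (hg : Continuous fun p : ℝ × ℝ × ℝ => g p.1 p.2.1 p.2.2)
    (hK : 0 ≤ K) (hlip : ∀ t s z₁ z₂, |g t s z₁ - g t s z₂| ≤ K * |z₁ - z₂|) (hab : a ≤ b) :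
    ∃ y : ℝ → ℝ, Continuous y ∧ ∀ t ∈ Icc a b, volterraIntegral g a y t = y t := by
  -- Bielecki's trick: conjugated by the weight `exp (η * (t - a))`, the Volterra operator
  -- becomes a sup-norm contraction with constant `K / η`.
  set η := K + 1
  have hη : 0 < η := by positivity
  set lift : C(Icc a b, ℝ) → ℝ → ℝ := fun u s => exp (η * (s - a)) * ContinuousMap.IccExtend hab u s
  have hlift : ∀ u, Continuous (lift u) := fun u => by fun_prop
  set T : C(Icc a b, ℝ) → C(Icc a b, ℝ) := fun u =>
    ⟨fun t => exp (-(η * (t - a))) * volterraIntegral g a (lift u) t,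
      by have := continuous_volterraIntegral (a := a) hg (hlift u); fun_prop⟩
  have hT : ContractingWith (K / η).toNNReal T := by
    refine ⟨?_, LipschitzWith.of_dist_le_mul fun u v =>
      (ContinuousMap.dist_le (by positivity)).2 fun t => ?_⟩
    · rw [Real.toNNReal_lt_one, div_lt_one hη]
      linarith
    · have hdist : ∀ s ∈ Icc a t, |lift u s - lift v s| ≤ dist u v * exp (η * (s - a)) :=
        fun s _ => by
          rw [← mul_sub, abs_mul, abs_of_pos (exp_pos _), mul_comm, ← Real.dist_eq]
          gcongr
          exact u.dist_apply_le_dist (projIcc a b hab s)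
      have := abs_volterraIntegral_sub_le_of_abs_sub_le_exp hg hK hlip hη t.2.1
        (hlift u) (hlift v) hdist
      rw [Real.dist_eq]
      simp only [T, ContinuousMap.coe_mk, ← mul_sub, abs_mul, exp_neg, abs_inv, abs_exp]
      rw [inv_mul_le_iff₀ (exp_pos _), Real.coe_toNNReal _ (by positivity)]
      linarith
  obtain ⟨u₀, hu₀⟩ : ∃ u₀, T u₀ = u₀ := ⟨_, hT.fixedPoint_isFixedPt⟩
  refine ⟨lift u₀, hlift u₀, fun t ht => ?_⟩
  have hfix : exp (-(η * (t - a))) * volterraIntegral g a (lift u₀) t = u₀ ⟨t, ht⟩ :=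
    congrArg (fun u => u ⟨t, ht⟩) hu₀
  simp only [lift, ContinuousMap.coe_IccExtend, IccExtend_of_mem hab _ ht, ← hfix, exp_neg]
  field_simp

theorem abs_sub_le_mul_exp_of_abs_sub_volterraIntegral_le
    (hg : Continuous fun p : ℝ × ℝ × ℝ => g p.1 p.2.1 p.2.2) (hK : 0 ≤ K)
    (hlip : ∀ t s z₁ z₂, |g t s z₁ - g t s z₂| ≤ K * |z₁ - z₂|) {y₀ z ψ : ℝ → ℝ}
    (hy₀ : ContinuousOn y₀ (Icc a b)) (hy₀_eq : ∀ t ∈ Icc a b, volterraIntegral g a y₀ t = y₀ t)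
    (hz : ContinuousOn z (Icc a b)) (hψ : MonotoneOn ψ (Icc a b))
    (hzψ : ∀ t ∈ Icc a b, |z t - volterraIntegral g a z t| ≤ ψ t) :
    ∀ t ∈ Icc a b, |z t - y₀ t| ≤ ψ t * exp (K * (t - a)) := by
  refine le_mul_exp_of_le_add_mul_integral hK (hz.sub hy₀).abs hψ fun t ht => ?_
  have hsub : Icc a t ⊆ Icc a b := Icc_subset_Icc_right ht.2
  calc |z t - y₀ t|
      ≤ |z t - volterraIntegral g a z t| +
          |volterraIntegral g a z t - volterraIntegral g a y₀ t| := by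
        rw [hy₀_eq t ht]; exact abs_sub_le _ _ _
    _ ≤ ψ t + K * ∫ s in a..t, |z s - y₀ s| :=
        add_le_add (hzψ t ht)
          (abs_volterraIntegral_sub_le hg hlip ht.1 (hz.mono hsub) (hy₀.mono hsub))

end Volterra

theorem exists_continuous_extension_of_continuousOn {f : ℝ → ℝ → ℝ → ℝ} {a b K : ℝ}
    (hab : a ≤ b)
    (hf : ContinuousOn (fun p : ℝ × ℝ × ℝ => f p.1 p.2.1 p.2.2) (Icc a b ×ˢ Icc a b ×ˢ univ))
    (hlip : ∀ t ∈ Icc a b, ∀ s ∈ Icc a b, ∀ z₁ z₂ : ℝ, |f t s z₁ - f t s z₂| ≤ K * |z₁ - z₂|) :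
    ∃ g : ℝ → ℝ → ℝ → ℝ, Continuous (fun p : ℝ × ℝ × ℝ => g p.1 p.2.1 p.2.2) ∧
      (∀ t s z₁ z₂, |g t s z₁ - g t s z₂| ≤ K * |z₁ - z₂|) ∧
      ∀ t ∈ Icc a b, ∀ s ∈ Icc a b, ∀ z, g t s z = f t s z := by
  refine ⟨fun t s z => f (projIcc a b hab t) (projIcc a b hab s) z, ?_,
    fun t s => hlip _ (projIcc a b hab t).2 _ (projIcc a b hab s).2, fun t ht s hs z => ?_⟩
  · exact hf.comp_continuous (f := fun p : ℝ × ℝ × ℝ =>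
        ((projIcc a b hab p.1 : ℝ), (projIcc a b hab p.2.1 : ℝ), p.2.2)) (by fun_prop)
      fun p : ℝ × ℝ × ℝ => ⟨(projIcc a b hab p.1).2, (projIcc a b hab p.2.1).2, mem_univ _⟩
  · simp only [projIcc_of_mem hab ht, projIcc_of_mem hab hs]

theorem exp_mul_le_exp_mul_div_one_sub_div {L η x r : ℝ} (hL : 0 ≤ L) (hLη : L < η)
    (hx : 0 ≤ x) (hxr : x ≤ r) : exp (L * x) ≤ exp (η * r) / (1 - L / η) := by
  have hη : 0 < η := hL.trans_lt hLη
  calc exp (L * x) ≤ exp (η * r) := exp_le_exp.2 (by nlinarith)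
    _ ≤ exp (η * r) / (1 - L / η) :=
      le_div_self (exp_pos _).le (by rw [sub_pos, div_lt_one hη]; exact hLη)
        (by linarith [div_nonneg hL hη.le])

theorem volterra_kernel_HUR_stability_general
    (t₀ r L η : ℝ) (hr : 0 < r) (hL : 0 < L) (hη : L < η)
    (f : ℝ → ℝ → ℝ → ℝ)
    (hf : ContinuousOn (fun p : ℝ × ℝ × ℝ => f p.1 p.2.1 p.2.2)
      (Set.Icc t₀ (t₀ + r) ×ˢ Set.Icc t₀ (t₀ + r) ×ˢ Set.univ))
    (hlip : ∀ t ∈ Set.Icc t₀ (t₀ + r), ∀ s ∈ Set.Icc t₀ (t₀ + r), ∀ z₁ z₂ : ℝ,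
      |f t s z₁ - f t s z₂| ≤ L * |z₁ - z₂|)
    (φ : ℝ → ℝ)
    (hφmono : MonotoneOn φ (Set.Icc t₀ (t₀ + r)))
    (y : ℝ → ℝ) (hy : ContinuousOn y (Set.Icc t₀ (t₀ + r)))
    (happrox : ∀ t ∈ Set.Icc t₀ (t₀ + r),
      |y t - ∫ s in t₀..t, f t s (y s)| ≤ φ t) :
    ∃ y₀ : ℝ → ℝ,
      (ContinuousOn y₀ (Set.Icc t₀ (t₀ + r)) ∧
        (∀ t ∈ Set.Icc t₀ (t₀ + r), y₀ t = ∫ s in t₀..t, f t s (y₀ s)) ∧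
        (∀ t ∈ Set.Icc t₀ (t₀ + r),
          |y t - y₀ t| ≤ φ t * Real.exp (η * r) / (1 - L / η))) ∧
      (∀ z : ℝ → ℝ,
        ContinuousOn z (Set.Icc t₀ (t₀ + r)) →
        (∀ t ∈ Set.Icc t₀ (t₀ + r), z t = ∫ s in t₀..t, f t s (z s)) →
        (∀ t ∈ Set.Icc t₀ (t₀ + r),
          |y t - z t| ≤ φ t * Real.exp (η * r) / (1 - L / η)) →
        ∀ t ∈ Set.Icc t₀ (t₀ + r), z t = y₀ t) := by
  have hle : t₀ ≤ t₀ + r := by linarith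
  obtain ⟨g, hg, hglip, hgf⟩ := exists_continuous_extension_of_continuousOn hle hf hlip
  have hfg : ∀ x : ℝ → ℝ, ∀ t ∈ Icc t₀ (t₀ + r),
      ∫ s in t₀..t, f t s (x s) = volterraIntegral g t₀ x t := fun x t ht =>
    intervalIntegral.integral_congr fun s hs =>
      (hgf t ht s (uIcc_subset_Icc (left_mem_Icc.2 hle) ht hs) _).symm
  obtain ⟨y₀, hy₀, hy₀_eq⟩ := exists_continuous_volterraIntegral_eq hg hL.le hglip hle
  have hgronwall : ∀ z ψ : ℝ → ℝ, ContinuousOn z (Icc t₀ (t₀ + r)) →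
      MonotoneOn ψ (Icc t₀ (t₀ + r)) →
      (∀ t ∈ Icc t₀ (t₀ + r), |z t - ∫ s in t₀..t, f t s (z s)| ≤ ψ t) →
      ∀ t ∈ Icc t₀ (t₀ + r), |z t - y₀ t| ≤ ψ t * exp (L * (t - t₀)) :=
    fun z ψ hz hψ hzψ => abs_sub_le_mul_exp_of_abs_sub_volterraIntegral_le hg hL.le hglip
      hy₀.continuousOn hy₀_eq hz hψ fun t ht => hfg z t ht ▸ hzψ t ht
  refine ⟨y₀, ⟨hy₀.continuousOn, fun t ht => by rw [hfg y₀ t ht, hy₀_eq t ht], fun t ht => ?_⟩,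
    fun z hz hz_eq _ t ht => ?_⟩
  · have hφ : 0 ≤ φ t := (abs_nonneg _).trans (happrox t ht)
    calc |y t - y₀ t| ≤ φ t * exp (L * (t - t₀)) := hgronwall y φ hy hφmono happrox t ht
      _ ≤ φ t * exp (η * r) / (1 - L / η) := by
        rw [mul_div_assoc]
        exact mul_le_mul_of_nonneg_left (exp_mul_le_exp_mul_div_one_sub_div hL.le hη
          (sub_nonneg.2 ht.1) (by linarith [ht.2])) hφ
  · have := hgronwall z (fun _ => 0) hz monotoneOn_const
      (fun s hs => by rw [← hz_eq s hs, sub_self, abs_zero]) t ht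
    rwa [zero_mul, abs_nonpos_iff, sub_eq_zero] at this

/-- Hyers–Ulam–Rassias stability of `y(t) = ∫_{t₀}^t f(t, s, y(s)) ds` on
`I = [t₀, t₀+r]` for a kernel depending on both variables. -/
theorem volterra_kernel_HUR_stability
    (t₀ r L η : ℝ) (hr : 0 < r) (hL : 0 < L) (hη : L < η)
    (f : ℝ → ℝ → ℝ → ℝ)
    (hf : ContinuousOn (fun p : ℝ × ℝ × ℝ => f p.1 p.2.1 p.2.2)
      (Set.Icc t₀ (t₀ + r) ×ˢ Set.Icc t₀ (t₀ + r) ×ˢ Set.univ))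
    (hlip : ∀ t ∈ Set.Icc t₀ (t₀ + r), ∀ s ∈ Set.Icc t₀ (t₀ + r), ∀ z₁ z₂ : ℝ,
      |f t s z₁ - f t s z₂| ≤ L * |z₁ - z₂|)
    (φ : ℝ → ℝ) (hφc : ContinuousOn φ (Set.Icc t₀ (t₀ + r)))
    (hφmono : MonotoneOn φ (Set.Icc t₀ (t₀ + r)))
    (hφpos : ∀ t ∈ Set.Icc t₀ (t₀ + r), 0 < φ t)
    (y : ℝ → ℝ) (hy : ContinuousOn y (Set.Icc t₀ (t₀ + r)))
    (happrox : ∀ t ∈ Set.Icc t₀ (t₀ + r),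
      |y t - ∫ s in t₀..t, f t s (y s)| ≤ φ t) :
    ∃ y₀ : ℝ → ℝ,
      (ContinuousOn y₀ (Set.Icc t₀ (t₀ + r)) ∧
        (∀ t ∈ Set.Icc t₀ (t₀ + r), y₀ t = ∫ s in t₀..t, f t s (y₀ s)) ∧
        (∀ t ∈ Set.Icc t₀ (t₀ + r),
          |y t - y₀ t| ≤ φ t * Real.exp (η * r) / (1 - L / η))) ∧
      (∀ z : ℝ → ℝ,
        ContinuousOn z (Set.Icc t₀ (t₀ + r)) →
        (∀ t ∈ Set.Icc t₀ (t₀ + r), z t = ∫ s in t₀..t, f t s (z s)) →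
        (∀ t ∈ Set.Icc t₀ (t₀ + r),
          |y t - z t| ≤ φ t * Real.exp (η * r) / (1 - L / η)) →
        ∀ t ∈ Set.Icc t₀ (t₀ + r), z t = y₀ t) :=
  volterra_kernel_HUR_stability_general t₀ r L η hr hL hη f hf hlip φ hφmono y hy happrox
end

section
/- The Volterra integral equation $y(t)=\int_0^t s\, y(s)\,ds$ is Hyers–Ulam stable on $[0,2]$: for every $\varepsilon>0$ there exists a constant $K>0$ such that every continuous $y:[0,2]\to\mathbb{R}$ with $|y(t)-\int_0^t s\,y(s)\,ds|\le\varepsilon$ for all $t\in[0,2]$ satisfies $|y(t)-y_0(t)|\le K\varepsilon$ for some continuous solution $y_0$ of the equation. -/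
/-! An approximate solution `u` of `u(t) = ∫_a^t k(s) u(s) ds` with `|k| ≤ L` is controlled by
Grönwall's inequality applied to its primitive `G(t) = ∫_a^t k u`: since `u = G + O(ε)`, we get
`‖G'‖ ≤ L ‖G‖ + L ε`, hence `‖G(t)‖ ≤ ε (e^{L(t-a)} - 1)` and `‖u(t)‖ ≤ ε e^{L(t-a)}`. The unique
exact solution is `0`, so on `[0, 2]` with `k(s) = s` every `ε`-approximate solution lies within
`e^4 ε` of it. -/

open Real Set

theorem gronwallBound_zero_mul (K ε x : ℝ) :
    gronwallBound 0 K (K * ε) x = ε * (exp (K * x) - 1) := by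
  rcases eq_or_ne K 0 with rfl | hK
  · simp [gronwallBound_K0]
  · rw [gronwallBound_of_K_ne_0 hK]
    field_simp
    ring

theorem ContinuousOn.exists_continuous_eqOn_Icc {β : Type*} [TopologicalSpace β] {f : ℝ → β}
    {a b : ℝ} (hab : a ≤ b) (hf : ContinuousOn f (Icc a b)) :
    ∃ g : ℝ → β, Continuous g ∧ EqOn g f (Icc a b) :=
  ⟨IccExtend hab ((Icc a b).domRestrict f), (continuousOn_iff_continuous_domRestrict.1 hf).Icc_extend',
    fun _ hx => IccExtend_of_mem hab _ hx⟩

variable {E : Type*} [NormedAddCommGroup E] [NormedSpace ℝ E] [CompleteSpace E]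

theorem norm_le_mul_exp_of_norm_sub_integral_smul_le {k : ℝ → ℝ} {u : ℝ → E} {a b L ε : ℝ}
    (hk : Continuous k) (hu : Continuous u) (hkL : ∀ s ∈ Icc a b, |k s| ≤ L)
    (hε : ∀ t ∈ Icc a b, ‖u t - ∫ s in a..t, k s • u s‖ ≤ ε) :
    ∀ t ∈ Icc a b, ‖u t‖ ≤ ε * exp (L * (t - a)) := by
  set G : ℝ → E := fun t => ∫ s in a..t, k s • u s
  have hG : ∀ t, HasDerivAt G (k t • u t) t := fun t =>
    ((hk.smul hu).integral_hasStrictDerivAt a t).hasDerivAt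
  have hG_cont : Continuous G := continuous_iff_continuousAt.2 fun t => (hG t).continuousAt
  have hG_deriv_le : ∀ t ∈ Ico a b, ‖k t • u t‖ ≤ L * ‖G t‖ + L * ε := by
    intro t ht
    have hkt := hkL t (Ico_subset_Icc_self ht)
    have hu_le : ‖u t‖ ≤ ‖G t‖ + ε := by
      linarith [norm_le_norm_sub_add (u t) (G t), hε t (Ico_subset_Icc_self ht)]
    calc ‖k t • u t‖ = |k t| * ‖u t‖ := by rw [norm_smul, Real.norm_eq_abs]
      _ ≤ L * (‖G t‖ + ε) := mul_le_mul hkt hu_le (norm_nonneg _) ((abs_nonneg _).trans hkt)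
      _ = L * ‖G t‖ + L * ε := by ring
  have hG_le : ∀ t ∈ Icc a b, ‖G t‖ ≤ ε * (exp (L * (t - a)) - 1) := fun t ht => by
    simpa only [gronwallBound_zero_mul] using
      norm_le_gronwallBound_of_norm_deriv_right_le (δ := 0) hG_cont.continuousOn
        (fun t _ => (hG t).hasDerivWithinAt) (by simp [G]) hG_deriv_le t ht
  intro t ht
  calc ‖u t‖ ≤ ‖u t - G t‖ + ‖G t‖ := norm_le_norm_sub_add _ _
    _ ≤ ε + ε * (exp (L * (t - a)) - 1) := add_le_add (hε t ht) (hG_le t ht)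
    _ = ε * exp (L * (t - a)) := by ring

theorem norm_le_mul_exp_of_norm_sub_integral_smul_le_of_continuousOn {k : ℝ → ℝ} {u : ℝ → E}
    {a b L ε : ℝ} (hk : ContinuousOn k (Icc a b)) (hu : ContinuousOn u (Icc a b))
    (hkL : ∀ s ∈ Icc a b, |k s| ≤ L) (hε : ∀ t ∈ Icc a b, ‖u t - ∫ s in a..t, k s • u s‖ ≤ ε)
    {t : ℝ} (ht : t ∈ Icc a b) : ‖u t‖ ≤ ε * exp (L * (t - a)) := by
  have hab : a ≤ b := ht.1.trans ht.2
  obtain ⟨k', hk'_cont, hk'⟩ := hk.exists_continuous_eqOn_Icc hab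
  obtain ⟨u', hu'_cont, hu'⟩ := hu.exists_continuous_eqOn_Icc hab
  have h_integral : ∀ t ∈ Icc a b, ∫ s in a..t, k' s • u' s = ∫ s in a..t, k s • u s :=
    fun t ht => intervalIntegral.integral_congr fun s hs => by
      rw [uIcc_of_le ht.1] at hs
      have hs' : s ∈ Icc a b := ⟨hs.1, hs.2.trans ht.2⟩
      rw [hk' hs', hu' hs']
  rw [← hu' ht]
  refine norm_le_mul_exp_of_norm_sub_integral_smul_le hk'_cont hu'_cont
    (fun s hs => hk' hs ▸ hkL s hs) (fun t ht => ?_) t ht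
  rw [h_integral t ht, hu' ht]
  exact hε t ht

/-- Hyers–Ulam stability of `y(t) = ∫_0^t s·y(s) ds` on `[0,2]` (even though
the Lipschitz constant `L = 2` and `Lr = 4 > 1`). -/
theorem example_volterra_HU_stable :
    ∀ ε : ℝ, 0 < ε → ∃ K : ℝ, 0 < K ∧
      ∀ y : ℝ → ℝ, ContinuousOn y (Set.Icc (0:ℝ) 2) →
        (∀ t ∈ Set.Icc (0:ℝ) 2, |y t - ∫ s in (0:ℝ)..t, s * y s| ≤ ε) →
        ∃ y₀ : ℝ → ℝ, ContinuousOn y₀ (Set.Icc (0:ℝ) 2) ∧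
          (∀ t ∈ Set.Icc (0:ℝ) 2, y₀ t = ∫ s in (0:ℝ)..t, s * y₀ s) ∧
          (∀ t ∈ Set.Icc (0:ℝ) 2, |y t - y₀ t| ≤ K * ε) := by
  intro ε hε
  refine ⟨exp 4, exp_pos 4, fun y hy hyε => ⟨0, continuousOn_const, fun t _ => by simp, ?_⟩⟩
  intro t ht
  have hy_le : |y t| ≤ ε * exp (2 * (t - 0)) :=
    norm_le_mul_exp_of_norm_sub_integral_smul_le_of_continuousOn continuousOn_id hy
      (fun s hs => abs_le.2 ⟨by simp only [id]; linarith [hs.1], hs.2⟩) hyε ht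
  calc |y t - 0| = |y t| := by rw [sub_zero]
    _ ≤ ε * exp (2 * (t - 0)) := hy_le
    _ ≤ ε * exp 4 := by gcongr; linarith [ht.2]
    _ = exp 4 * ε := mul_comm _ _
end

section
/- Let $I=[t_0,t_0+r]$ and let $\eta>L>0$. Suppose $y,y_0:I\to\mathbb{R}$ are continuous, $y_0$ satisfies $y_0(t)=\int_{t_0}^t f(s,y_0(s))\,ds$, $f$ is $L$-Lipschitz in its second variable, and $|y(t)-\int_{t_0}^t f(s,y(s))\,ds|\le \varphi(t)$ on $I$ with $\varphi$ nondecreasing, continuous, positive. Then $\sup_{t\in I} \frac{|y(t)-y_0(t)|\,e^{-\eta(t-t_0)}}{\varphi(t)} \le \frac{1}{1-L/\eta}$. -/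
/-!
Let `u = |y - y₀|`. Subtracting the two integral equations and using the Lipschitz bound gives
the Volterra inequality `u t ≤ φ t + L ∫_{t₀}^t u`. Let `M` be the maximum over `I` of the
Bielecki-weighted quantity `u t e^{-η(t-t₀)} / φ t`, attained at some `c`. Since `φ` is
nondecreasing, `u s ≤ M φ c e^{η(s-t₀)}` for `s ≤ c`, and integrating the exponential
loses the factor `η`, so at `c` the inequality becomes `M ≤ 1 + (L/η) M`, i.e.
`M ≤ 1/(1 - L/η)`.
-/

open Real Set intervalIntegral

theorem abs_sub_le_add_integral_of_lipschitz {a b L : ℝ} {f : ℝ → ℝ → ℝ}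
    (hf : ContinuousOn (fun p : ℝ × ℝ => f p.1 p.2) (Icc a b ×ˢ univ))
    (hlip : ∀ t ∈ Icc a b, ∀ y₁ y₂ : ℝ, |f t y₁ - f t y₂| ≤ L * |y₁ - y₂|)
    {φ y y₀ : ℝ → ℝ} (hy : ContinuousOn y (Icc a b)) (hy₀ : ContinuousOn y₀ (Icc a b))
    (hsol : ∀ t ∈ Icc a b, y₀ t = ∫ s in a..t, f s (y₀ s))
    (happrox : ∀ t ∈ Icc a b, |y t - ∫ s in a..t, f s (y s)| ≤ φ t)
    {t : ℝ} (ht : t ∈ Icc a b) :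
    |y t - y₀ t| ≤ φ t + L * ∫ s in a..t, |y s - y₀ s| := by
  have hsub : Icc a t ⊆ Icc a b := Icc_subset_Icc_right ht.2
  have hcomp : ∀ z : ℝ → ℝ, ContinuousOn z (Icc a b) →
      IntervalIntegrable (fun s => f s (z s)) MeasureTheory.volume a t := fun z hz =>
    ((hf.comp (continuousOn_id.prodMk hz) fun s hs => ⟨hs, mem_univ _⟩).mono
      hsub).intervalIntegrable_of_Icc ht.1
  have hdiff : |∫ s in a..t, (f s (y s) - f s (y₀ s))| ≤ ∫ s in a..t, L * |y s - y₀ s| := by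
    refine norm_integral_le_of_norm_le (f := fun s => f s (y s) - f s (y₀ s)) ht.1
      (MeasureTheory.ae_of_all _ fun s hs => ?_) ?_
    · exact hlip s (hsub (Ioc_subset_Icc_self hs)) _ _
    · exact (((hy.sub hy₀).abs.mono hsub).intervalIntegrable_of_Icc ht.1).const_mul L
  calc |y t - y₀ t|
      = |(y t - ∫ s in a..t, f s (y s)) + ∫ s in a..t, (f s (y s) - f s (y₀ s))| := by
        rw [integral_sub (hcomp y hy) (hcomp y₀ hy₀), hsol t ht]; congr 1; ring
    _ ≤ φ t + ∫ s in a..t, L * |y s - y₀ s| :=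
        (abs_add_le _ _).trans (add_le_add (happrox t ht) hdiff)
    _ = φ t + L * ∫ s in a..t, |y s - y₀ s| := by rw [integral_const_mul]

theorem integral_exp_mul_sub_le {η : ℝ} (hη : 0 < η) (a b : ℝ) :
    ∫ s in a..b, exp (η * (s - a)) ≤ exp (η * (b - a)) / η := by
  simp_rw [mul_sub]
  rw [integral_comp_mul_sub (fun x => exp x) hη.ne', integral_exp, sub_self, exp_zero,
    smul_eq_mul, inv_mul_eq_div]
  gcongr
  linarith

theorem le_mul_exp_of_exp_weighted_le {t₀ c η M : ℝ} {u φ : ℝ → ℝ}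
    (hφmono : MonotoneOn φ (Icc t₀ c)) (hφpos : ∀ s ∈ Icc t₀ c, 0 < φ s) (hM : 0 ≤ M)
    (h : ∀ s ∈ Icc t₀ c, u s * exp (-(η * (s - t₀))) / φ s ≤ M) :
    ∀ s ∈ Icc t₀ c, u s ≤ M * φ c * exp (η * (s - t₀)) := by
  intro s hs
  have hc : c ∈ Icc t₀ c := ⟨hs.1.trans hs.2, le_rfl⟩
  have hs' := h s hs
  rw [exp_neg, ← div_eq_mul_inv, div_div, div_le_iff₀ (by positivity [hφpos s hs])] at hs'
  calc u s ≤ M * (exp (η * (s - t₀)) * φ s) := hs'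
    _ ≤ M * (exp (η * (s - t₀)) * φ c) := by gcongr; exact hφmono hs hc hs.2
    _ = M * φ c * exp (η * (s - t₀)) := by ring

theorem exp_weighted_le_of_le_add_integral {t₀ b L η : ℝ} {u φ : ℝ → ℝ}
    (hL : 0 ≤ L) (hη : L < η)
    (hu : ContinuousOn u (Icc t₀ b)) (hu₀ : ∀ t ∈ Icc t₀ b, 0 ≤ u t)
    (hφc : ContinuousOn φ (Icc t₀ b)) (hφmono : MonotoneOn φ (Icc t₀ b))
    (hφpos : ∀ t ∈ Icc t₀ b, 0 < φ t)
    (hineq : ∀ t ∈ Icc t₀ b, u t ≤ φ t + L * ∫ s in t₀..t, u s) :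
    ∀ t ∈ Icc t₀ b, u t * exp (-(η * (t - t₀))) / φ t ≤ 1 / (1 - L / η) := by
  have hη₀ : 0 < η := hL.trans_lt hη
  intro t ht
  have hg : ContinuousOn (fun t => u t * exp (-(η * (t - t₀))) / φ t) (Icc t₀ b) :=
    (hu.mul (by fun_prop)).div hφc fun t ht => (hφpos t ht).ne'
  obtain ⟨c, hc, hmax⟩ := isCompact_Icc.exists_isMaxOn ⟨t, ht⟩ hg
  refine (hmax ht).trans ?_
  set M := u c * exp (-(η * (c - t₀))) / φ c
  have hsub : Icc t₀ c ⊆ Icc t₀ b := Icc_subset_Icc_right hc.2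
  have hM₀ : 0 ≤ M := div_nonneg (mul_nonneg (hu₀ c hc) (exp_pos _).le) (hφpos c hc).le
  have hbound := le_mul_exp_of_exp_weighted_le (hφmono.mono hsub)
    (fun s hs => hφpos s (hsub hs)) hM₀ (fun s hs => hmax (hsub hs))
  have hint : L * ∫ s in t₀..c, u s ≤ L / η * M * φ c * exp (η * (c - t₀)) :=
    calc L * ∫ s in t₀..c, u s
        ≤ L * ∫ s in t₀..c, M * φ c * exp (η * (s - t₀)) := by
          gcongr
          exact integral_mono_on hc.1 ((hu.mono hsub).intervalIntegrable_of_Icc hc.1)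
            (Continuous.intervalIntegrable (by fun_prop) _ _) hbound
      _ = L * (M * φ c) * ∫ s in t₀..c, exp (η * (s - t₀)) := by
          rw [integral_const_mul]; ring
      _ ≤ L * (M * φ c) * (exp (η * (c - t₀)) / η) := by
          gcongr
          · exact mul_nonneg hL (mul_nonneg hM₀ (hφpos c hc).le)
          · exact integral_exp_mul_sub_le hη₀ t₀ c
      _ = L / η * M * φ c * exp (η * (c - t₀)) := by ring
  have hself : M ≤ 1 + L / η * M :=
    calc M = u c * exp (-(η * (c - t₀))) / φ c := rfl
      _ ≤ (φ c + L / η * M * φ c * exp (η * (c - t₀))) * exp (-(η * (c - t₀))) / φ c := by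
          gcongr
          · exact (hφpos c hc).le
          · exact (hineq c hc).trans (by linarith)
      _ = exp (-(η * (c - t₀))) + L / η * M := by
          have hexp : exp (η * (c - t₀)) * exp (-(η * (c - t₀))) = 1 := by
            rw [← exp_add, add_neg_cancel, exp_zero]
          field_simp [(hφpos c hc).ne']
          linear_combination L * M * hexp
      _ ≤ 1 + L / η * M := by
          gcongr
          exact exp_le_one_iff.mpr (by nlinarith [hc.1])
  have hLη : L / η < 1 := (div_lt_one hη₀).mpr hη
  rw [le_div_iff₀ (by linarith)]
  linarith

theorem volterra_quantitative_estimate_general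
    (t₀ r L η : ℝ) (hL : 0 < L) (hη : L < η)
    (f : ℝ → ℝ → ℝ)
    (hf : ContinuousOn (fun p : ℝ × ℝ => f p.1 p.2) (Set.Icc t₀ (t₀ + r) ×ˢ Set.univ))
    (hlip : ∀ t ∈ Set.Icc t₀ (t₀ + r), ∀ y₁ y₂ : ℝ,
      |f t y₁ - f t y₂| ≤ L * |y₁ - y₂|)
    (φ : ℝ → ℝ) (hφc : ContinuousOn φ (Set.Icc t₀ (t₀ + r)))
    (hφmono : MonotoneOn φ (Set.Icc t₀ (t₀ + r)))
    (hφpos : ∀ t ∈ Set.Icc t₀ (t₀ + r), 0 < φ t)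
    (y y₀ : ℝ → ℝ)
    (hy : ContinuousOn y (Set.Icc t₀ (t₀ + r)))
    (hy₀ : ContinuousOn y₀ (Set.Icc t₀ (t₀ + r)))
    (hsol : ∀ t ∈ Set.Icc t₀ (t₀ + r), y₀ t = ∫ s in t₀..t, f s (y₀ s))
    (happrox : ∀ t ∈ Set.Icc t₀ (t₀ + r),
      |y t - ∫ s in t₀..t, f s (y s)| ≤ φ t) :
    ∀ t ∈ Set.Icc t₀ (t₀ + r),
      |y t - y₀ t| * Real.exp (-(η * (t - t₀))) / φ t ≤ 1 / (1 - L / η) :=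
  exp_weighted_le_of_le_add_integral hL.le hη (hy.sub hy₀).abs (fun _ _ => abs_nonneg _)
    hφc hφmono hφpos fun _ ht => abs_sub_le_add_integral_of_lipschitz hf hlip hy hy₀ hsol happrox ht

/-- Quantitative stability estimate from the fixed point alternative:
if `y₀` is the exact solution and `y` a `φ`-approximate solution, then
`|y t - y₀ t| e^{-η(t-t₀)} / φ t ≤ 1/(1 - L/η)` for all `t ∈ I`
(equivalently, the supremum over `I` is at most `1/(1 - L/η)`). -/
theorem volterra_quantitative_estimate
    (t₀ r L η : ℝ) (hr : 0 < r) (hL : 0 < L) (hη : L < η)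
    (f : ℝ → ℝ → ℝ)
    (hf : ContinuousOn (fun p : ℝ × ℝ => f p.1 p.2) (Set.Icc t₀ (t₀ + r) ×ˢ Set.univ))
    (hlip : ∀ t ∈ Set.Icc t₀ (t₀ + r), ∀ y₁ y₂ : ℝ,
      |f t y₁ - f t y₂| ≤ L * |y₁ - y₂|)
    (φ : ℝ → ℝ) (hφc : ContinuousOn φ (Set.Icc t₀ (t₀ + r)))
    (hφmono : MonotoneOn φ (Set.Icc t₀ (t₀ + r)))
    (hφpos : ∀ t ∈ Set.Icc t₀ (t₀ + r), 0 < φ t)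
    (y y₀ : ℝ → ℝ)
    (hy : ContinuousOn y (Set.Icc t₀ (t₀ + r)))
    (hy₀ : ContinuousOn y₀ (Set.Icc t₀ (t₀ + r)))
    (hsol : ∀ t ∈ Set.Icc t₀ (t₀ + r), y₀ t = ∫ s in t₀..t, f s (y₀ s))
    (happrox : ∀ t ∈ Set.Icc t₀ (t₀ + r),
      |y t - ∫ s in t₀..t, f s (y s)| ≤ φ t) :
    ∀ t ∈ Set.Icc t₀ (t₀ + r),
      |y t - y₀ t| * Real.exp (-(η * (t - t₀))) / φ t ≤ 1 / (1 - L / η) :=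
  volterra_quantitative_estimate_general t₀ r L η hL hη f hf hlip φ hφc hφmono hφpos y y₀ hy hy₀
    hsol happrox
end

section
/- Let $E_1,E_2$ be real Banach spaces, $\varepsilon>0$, and $f:E_1\to E_2$ satisfy $\|f(x+y)-f(x)-f(y)\|\le\varepsilon$ for all $x,y\in E_1$. Then the limit $L(x)=\lim_{n\to\infty} 2^{-n} f(2^n x)$ exists for every $x\in E_1$, and $L$ is the unique additive map $E_1\to E_2$ satisfying $\|f(x)-L(x)\|\le\varepsilon$ for all $x\in E_1$. -/
/-!
Rescaling by `2⁻ⁿ f (2ⁿ x)` divides the additivity defect of `f` by `2ⁿ`, and consecutive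
rescalings differ by at most `ε / 2ⁿ⁺¹`, because `‖f (x + x) - 2 f x‖ ≤ ε`. So the rescalings
converge geometrically to a map `L` with `‖f - L‖ ≤ ε` and zero additivity defect. An additive
`L'` is fixed by the rescaling, so `‖f - L'‖ ≤ ε` forces the rescalings of `f` to converge to `L'`.
-/

open Filter Topology

lemma tendsto_div_two_pow (c : ℝ) : Tendsto (fun n : ℕ ↦ c / 2 ^ n) atTop (𝓝 0) :=
  tendsto_const_nhds.div_atTop (tendsto_pow_atTop_atTop_of_one_lt one_lt_two)

section Rescaling

variable {E F : Type*} [AddCommGroup E] [Module ℝ E] [NormedAddCommGroup F] [NormedSpace ℝ F]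

noncomputable def dyadicRescale (f : E → F) (n : ℕ) (x : E) : F :=
  ((2 : ℝ) ^ n)⁻¹ • f ((2 : ℝ) ^ n • x)

@[simp]
lemma dyadicRescale_zero (f : E → F) : dyadicRescale f 0 = f := by
  funext x
  simp [dyadicRescale]

lemma dyadicRescale_succ (f : E → F) (n : ℕ) :
    dyadicRescale f (n + 1) = dyadicRescale (dyadicRescale f 1) n := by
  funext x
  simp only [dyadicRescale, smul_smul]
  rw [pow_one, pow_succ, mul_inv, mul_comm (2 : ℝ)]

lemma dyadicRescale_of_map_add {L : E → F} (hL : ∀ x y, L (x + y) = L x + L y) (n : ℕ) :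
    dyadicRescale L n = L := by
  funext x
  have hsmul : L ((2 : ℝ) ^ n • x) = (2 : ℝ) ^ n • L x := by
    simpa using map_natCast_smul (AddMonoidHom.mk' L hL) ℝ ℝ (2 ^ n) x
  rw [dyadicRescale, hsmul, inv_smul_smul₀ (by positivity)]

lemma norm_inv_two_pow_smul (n : ℕ) (v : F) : ‖((2 : ℝ) ^ n)⁻¹ • v‖ = ‖v‖ / 2 ^ n := by
  rw [norm_smul, norm_inv, norm_pow, Real.norm_two, inv_mul_eq_div]

variable {f : E → F} {ε : ℝ}

lemma norm_dyadicRescale_sub_le {g : E → F} (h : ∀ x, ‖f x - g x‖ ≤ ε) (n : ℕ) (x : E) :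
    ‖dyadicRescale f n x - dyadicRescale g n x‖ ≤ ε / 2 ^ n := by
  rw [dyadicRescale, dyadicRescale, ← smul_sub, norm_inv_two_pow_smul]
  gcongr
  exact h _

lemma norm_dyadicRescale_add_sub_le (hf : ∀ x y, ‖f (x + y) - f x - f y‖ ≤ ε) (n : ℕ)
    (x y : E) :
    ‖dyadicRescale f n (x + y) - dyadicRescale f n x - dyadicRescale f n y‖ ≤ ε / 2 ^ n := by
  rw [dyadicRescale, dyadicRescale, dyadicRescale, ← smul_sub, ← smul_sub, smul_add,
    norm_inv_two_pow_smul]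
  gcongr
  exact hf _ _

lemma norm_dyadicRescale_one_sub_le (hf : ∀ x y, ‖f (x + y) - f x - f y‖ ≤ ε) (x : E) :
    ‖dyadicRescale f 1 x - f x‖ ≤ ε / 2 := by
  have hsplit : dyadicRescale f 1 x - f x = ((2 : ℝ) ^ 1)⁻¹ • (f (x + x) - f x - f x) := by
    rw [dyadicRescale, pow_one, two_smul]
    module
  rw [hsplit, norm_inv_two_pow_smul, pow_one]
  gcongr
  exact hf x x

lemma dist_dyadicRescale_succ_le (hf : ∀ x y, ‖f (x + y) - f x - f y‖ ≤ ε) (n : ℕ) (x : E) :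
    dist (dyadicRescale f n x) (dyadicRescale f (n + 1) x) ≤ ε / 2 / 2 ^ n := by
  rw [dist_comm, dist_eq_norm, dyadicRescale_succ]
  exact norm_dyadicRescale_sub_le (norm_dyadicRescale_one_sub_le hf) n x

lemma tendsto_dyadicRescale_of_map_add {L : E → F} (hL : ∀ x y, L (x + y) = L x + L y)
    (hfL : ∀ x, ‖f x - L x‖ ≤ ε) (x : E) :
    Tendsto (fun n ↦ dyadicRescale f n x) atTop (𝓝 (L x)) := by
  rw [tendsto_iff_norm_sub_tendsto_zero]
  refine squeeze_zero (fun _ ↦ norm_nonneg _) (fun n ↦ ?_) (tendsto_div_two_pow ε)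
  simpa only [dyadicRescale_of_map_add hL] using norm_dyadicRescale_sub_le hfL n x

end Rescaling

lemma map_add_of_tendsto {ι E F : Type*} [Add E] [NormedAddCommGroup F] {l : Filter ι} [l.NeBot]
    {g : ι → E → F} {L : E → F} {δ : ι → ℝ} (hgL : ∀ x, Tendsto (fun i ↦ g i x) l (𝓝 (L x)))
    (hδ : Tendsto δ l (𝓝 0)) (hg : ∀ i x y, ‖g i (x + y) - g i x - g i y‖ ≤ δ i) (x y : E) :
    L (x + y) = L x + L y := by
  have hdefect : Tendsto (fun i ↦ g i (x + y) - g i x - g i y) l (𝓝 0) :=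
    squeeze_zero_norm (hg · x y) hδ
  have hlim := ((hgL (x + y)).sub (hgL x)).sub (hgL y)
  rw [← sub_eq_zero, ← sub_sub]
  exact tendsto_nhds_unique hlim hdefect

theorem hyers_stability_general
    {E₁ E₂ : Type*} [NormedAddCommGroup E₁] [NormedSpace ℝ E₁]
    [NormedAddCommGroup E₂] [NormedSpace ℝ E₂] [CompleteSpace E₂]
    (ε : ℝ) (f : E₁ → E₂)
    (hf : ∀ x y : E₁, ‖f (x + y) - f x - f y‖ ≤ ε) :
    ∃ L : E₁ → E₂,
      (∀ x : E₁, Filter.Tendsto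
        (fun n : ℕ => (((2:ℝ) ^ n)⁻¹) • f (((2:ℝ) ^ n) • x))
        Filter.atTop (nhds (L x))) ∧
      (∀ x y : E₁, L (x + y) = L x + L y) ∧
      (∀ x : E₁, ‖f x - L x‖ ≤ ε) ∧
      (∀ L' : E₁ → E₂, (∀ x y : E₁, L' (x + y) = L' x + L' y) →
        (∀ x : E₁, ‖f x - L' x‖ ≤ ε) → L' = L) := by
  choose L hL using fun x ↦ cauchySeq_tendsto_of_complete <|
    cauchySeq_of_le_geometric_two (dist_dyadicRescale_succ_le hf · x)
  have hLadd : ∀ x y, L (x + y) = L x + L y :=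
    map_add_of_tendsto hL (tendsto_div_two_pow ε) (norm_dyadicRescale_add_sub_le hf)
  have hfL : ∀ x, ‖f x - L x‖ ≤ ε := fun x ↦ by
    simpa [dist_eq_norm] using dist_le_of_le_geometric_two_of_tendsto₀
      (fun n ↦ dist_dyadicRescale_succ_le hf n x) (hL x)
  refine ⟨L, hL, hLadd, hfL, fun L' hL'add hfL' ↦ funext fun x ↦ ?_⟩
  exact tendsto_nhds_unique (tendsto_dyadicRescale_of_map_add hL'add hfL' x) (hL x)

/-- Hyers' theorem: if `f : E₁ → E₂` between real Banach spaces satisfies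
`‖f(x+y) - f x - f y‖ ≤ ε`, then `L x = lim_{n→∞} 2⁻ⁿ f(2ⁿ x)` exists for
every `x`, and `L` is the unique additive map with `‖f x - L x‖ ≤ ε`. -/
theorem hyers_stability
    {E₁ E₂ : Type*} [NormedAddCommGroup E₁] [NormedSpace ℝ E₁] [CompleteSpace E₁]
    [NormedAddCommGroup E₂] [NormedSpace ℝ E₂] [CompleteSpace E₂]
    (ε : ℝ) (hε : 0 < ε) (f : E₁ → E₂)
    (hf : ∀ x y : E₁, ‖f (x + y) - f x - f y‖ ≤ ε) :
    ∃ L : E₁ → E₂,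
      (∀ x : E₁, Filter.Tendsto
        (fun n : ℕ => (((2:ℝ) ^ n)⁻¹) • f (((2:ℝ) ^ n) • x))
        Filter.atTop (nhds (L x))) ∧
      (∀ x y : E₁, L (x + y) = L x + L y) ∧
      (∀ x : E₁, ‖f x - L x‖ ≤ ε) ∧
      (∀ L' : E₁ → E₂, (∀ x y : E₁, L' (x + y) = L' x + L' y) →
        (∀ x : E₁, ‖f x - L' x‖ ≤ ε) → L' = L) :=
  hyers_stability_general ε f hf
end

section
/- Let $E_1,E_2$ be real Banach spaces, $\theta>0$, $p\in[0,1)$, and let $f:E_1\to E_2$ satisfy $\|f(x+y)-f(x)-f(y)\|\le \theta(\|x\|^p+\|y\|^p)$ for all $x,y\in E_1$. Then there exists a unique additive map $L:E_1\to E_2$ with $\|f(x)-L(x)\|\le \frac{2\theta}{2-2^p}\|x\|^p$ for all $x\in E_1$. -/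
/-!
Hyers' direct method. The sequence `2⁻ⁿ f (2ⁿ x)` moves by at most `θ ‖x‖^p (2^p / 2)ⁿ` per
step, because `f (2y) - 2 f y` is a Cauchy difference. As `2^p < 2` it is Cauchy; its limit `L`
is additive, since the Cauchy differences of `f` at `(2ⁿ x, 2ⁿ y)`, rescaled by `2⁻ⁿ`, decay like
`(2^p / 2)ⁿ`, and the geometric series gives `‖f x - L x‖ ≤ θ ‖x‖^p / (1 - 2^p / 2)`. Any
additive `L'` within `O(‖x‖^p)` of `f` is the limit of the same sequence, whence uniqueness.
-/

open Filter Topology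

section Hyers

lemma two_rpow_div_two_lt_one {p : ℝ} (hp : p < 1) : (2 : ℝ) ^ p / 2 < 1 := by
  rw [div_lt_one two_pos]
  simpa using Real.rpow_lt_rpow_of_exponent_lt one_lt_two hp

lemma tendsto_mul_two_rpow_div_two_pow {p : ℝ} (hp : p < 1) (C : ℝ) :
    Tendsto (fun n : ℕ => C * (2 ^ p / 2) ^ n) atTop (𝓝 0) := by
  simpa using (tendsto_pow_atTop_nhds_zero_of_lt_one (by positivity)
    (two_rpow_div_two_lt_one hp)).const_mul C

variable {E F : Type*} [NormedAddCommGroup E] [NormedSpace ℝ E]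
  [NormedAddCommGroup F] [NormedSpace ℝ F]

lemma inv_two_pow_mul_norm_two_pow_smul_rpow (p : ℝ) (n : ℕ) (x : E) :
    ((2 : ℝ) ^ n)⁻¹ * ‖(2 : ℝ) ^ n • x‖ ^ p = ‖x‖ ^ p * (2 ^ p / 2) ^ n := by
  have h2n : (0 : ℝ) < 2 ^ n := by positivity
  have hscale : ‖(2 : ℝ) ^ n • x‖ ^ p = (2 ^ p) ^ n * ‖x‖ ^ p := by
    rw [norm_smul, Real.norm_of_nonneg h2n.le, Real.mul_rpow h2n.le (norm_nonneg x),
      ← Real.rpow_natCast 2 n, ← Real.rpow_mul zero_le_two, mul_comm (n : ℝ) p,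
      Real.rpow_mul zero_le_two, Real.rpow_natCast]
  rw [hscale, div_pow]
  field_simp

noncomputable def hyersSeq (f : E → F) (x : E) (n : ℕ) : F :=
  ((2 : ℝ) ^ n)⁻¹ • f ((2 : ℝ) ^ n • x)

@[simp]
lemma hyersSeq_zero (f : E → F) (x : E) : hyersSeq f x 0 = f x := by
  simp [hyersSeq]

lemma hyersSeq_sub (f g : E → F) (x : E) (n : ℕ) :
    hyersSeq (f - g) x n = hyersSeq f x n - hyersSeq g x n :=
  smul_sub _ _ _

lemma hyersSeq_of_map_add {g : E → F} (hg : ∀ x y, g (x + y) = g x + g y) (x : E) (n : ℕ) :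
    hyersSeq g x n = g x := by
  have hg_two_pow : ∀ m : ℕ, g ((2 : ℝ) ^ m • x) = (2 : ℝ) ^ m • g x := by
    intro m
    induction m with
    | zero => simp
    | succ m ih => rw [pow_succ, mul_two, add_smul, add_smul, hg, ih]
  rw [hyersSeq, hg_two_pow, inv_smul_smul₀ (by positivity)]

lemma norm_hyersSeq_le {h : E → F} {K p : ℝ} (hh : ∀ x, ‖h x‖ ≤ K * ‖x‖ ^ p) (x : E) (n : ℕ) :
    ‖hyersSeq h x n‖ ≤ K * ‖x‖ ^ p * (2 ^ p / 2) ^ n :=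
  calc ‖hyersSeq h x n‖ = ((2 : ℝ) ^ n)⁻¹ * ‖h ((2 : ℝ) ^ n • x)‖ := by
        rw [hyersSeq, norm_smul, norm_inv, norm_pow, Real.norm_two]
    _ ≤ ((2 : ℝ) ^ n)⁻¹ * (K * ‖(2 : ℝ) ^ n • x‖ ^ p) := by gcongr; exact hh _
    _ = K * ‖x‖ ^ p * (2 ^ p / 2) ^ n := by
        rw [mul_left_comm, inv_two_pow_mul_norm_two_pow_smul_rpow, mul_assoc]

lemma tendsto_hyersSeq_of_norm_sub_le {f g : E → F} (hg : ∀ x y, g (x + y) = g x + g y)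
    {K p : ℝ} (hp : p < 1) (hfg : ∀ x, ‖f x - g x‖ ≤ K * ‖x‖ ^ p) (x : E) :
    Tendsto (hyersSeq f x) atTop (𝓝 (g x)) := by
  rw [tendsto_iff_norm_sub_tendsto_zero]
  refine squeeze_zero (fun n => norm_nonneg _) (fun n => ?_)
    (tendsto_mul_two_rpow_div_two_pow hp (K * ‖x‖ ^ p))
  rw [← hyersSeq_of_map_add hg x n, ← hyersSeq_sub]
  exact norm_hyersSeq_le hfg x n

variable {f : E → F} {θ p : ℝ}
  (hf : ∀ x y : E, ‖f (x + y) - f x - f y‖ ≤ θ * (‖x‖ ^ p + ‖y‖ ^ p))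
include hf

lemma dist_hyersSeq_succ_le (x : E) (n : ℕ) :
    dist (hyersSeq f x n) (hyersSeq f x (n + 1)) ≤ θ * ‖x‖ ^ p * (2 ^ p / 2) ^ n := by
  set y := (2 : ℝ) ^ n • x
  -- one doubling step is half a Cauchy difference at `(y, y)`
  have hstep : hyersSeq f x (n + 1) - hyersSeq f x n
      = ((2 : ℝ) ^ n)⁻¹ • ((2 : ℝ)⁻¹ • (f (y + y) - f y - f y)) := by
    rw [hyersSeq, hyersSeq, pow_succ', mul_smul, ← two_smul ℝ y, mul_inv, mul_smul,
      smul_comm (2 : ℝ)⁻¹, sub_sub, ← two_smul ℝ (f y), smul_sub, smul_sub,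
      inv_smul_smul₀ two_ne_zero]
  have hhalf : ‖(2 : ℝ)⁻¹ • (f (y + y) - f y - f y)‖ ≤ θ * ‖y‖ ^ p := by
    rw [norm_smul, norm_inv, Real.norm_two]
    linarith [hf y y]
  rw [dist_comm, dist_eq_norm, hstep, norm_smul, norm_inv, norm_pow, Real.norm_two]
  calc ((2 : ℝ) ^ n)⁻¹ * ‖(2 : ℝ)⁻¹ • (f (y + y) - f y - f y)‖
      ≤ ((2 : ℝ) ^ n)⁻¹ * (θ * ‖y‖ ^ p) := by gcongr
    _ = θ * ‖x‖ ^ p * (2 ^ p / 2) ^ n := by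
        rw [mul_left_comm, inv_two_pow_mul_norm_two_pow_smul_rpow, mul_assoc]

lemma norm_sub_le_of_tendsto_hyersSeq (hp : p < 1) {x : E} {l : F}
    (hl : Tendsto (hyersSeq f x) atTop (𝓝 l)) :
    ‖f x - l‖ ≤ 2 * θ / (2 - 2 ^ p) * ‖x‖ ^ p := by
  have h := dist_le_of_le_geometric_of_tendsto₀ _ _ (two_rpow_div_two_lt_one hp)
    (dist_hyersSeq_succ_le hf x) hl
  have h2p : (2 : ℝ) ^ p < 2 := by linarith [two_rpow_div_two_lt_one hp]
  rw [dist_eq_norm, hyersSeq_zero] at h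
  calc ‖f x - l‖ ≤ θ * ‖x‖ ^ p / (1 - 2 ^ p / 2) := h
    _ = 2 * θ / (2 - 2 ^ p) * ‖x‖ ^ p := by
        field_simp [(sub_pos.2 h2p).ne']

lemma map_add_of_tendsto_hyersSeq (hp : p < 1) {L : E → F}
    (hL : ∀ x, Tendsto (hyersSeq f x) atTop (𝓝 (L x))) (x y : E) :
    L (x + y) = L x + L y := by
  have hbound : ∀ n, ‖hyersSeq f (x + y) n - hyersSeq f x n - hyersSeq f y n‖
      ≤ θ * (‖x‖ ^ p + ‖y‖ ^ p) * (2 ^ p / 2) ^ n := by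
    intro n
    calc ‖hyersSeq f (x + y) n - hyersSeq f x n - hyersSeq f y n‖
        = ((2 : ℝ) ^ n)⁻¹ * ‖f ((2 : ℝ) ^ n • x + (2 : ℝ) ^ n • y)
            - f ((2 : ℝ) ^ n • x) - f ((2 : ℝ) ^ n • y)‖ := by
          rw [hyersSeq, hyersSeq, hyersSeq, ← smul_sub, ← smul_sub, smul_add, norm_smul,
            norm_inv, norm_pow, Real.norm_two]
      _ ≤ ((2 : ℝ) ^ n)⁻¹ * (θ * (‖(2 : ℝ) ^ n • x‖ ^ p + ‖(2 : ℝ) ^ n • y‖ ^ p)) := by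
          gcongr; exact hf _ _
      _ = θ * (((2 : ℝ) ^ n)⁻¹ * ‖(2 : ℝ) ^ n • x‖ ^ p
            + ((2 : ℝ) ^ n)⁻¹ * ‖(2 : ℝ) ^ n • y‖ ^ p) := by ring
      _ = θ * (‖x‖ ^ p + ‖y‖ ^ p) * (2 ^ p / 2) ^ n := by
          rw [inv_two_pow_mul_norm_two_pow_smul_rpow, inv_two_pow_mul_norm_two_pow_smul_rpow]
          ring
  have hzero : Tendsto (fun n => hyersSeq f (x + y) n - hyersSeq f x n - hyersSeq f y n)
      atTop (𝓝 0) :=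
    squeeze_zero_norm hbound (tendsto_mul_two_rpow_div_two_pow hp _)
  have hlim := tendsto_nhds_unique (((hL (x + y)).sub (hL x)).sub (hL y)) hzero
  rwa [sub_sub, sub_eq_zero] at hlim

end Hyers

theorem rassias_stability_general
    {E₁ E₂ : Type*} [NormedAddCommGroup E₁] [NormedSpace ℝ E₁]
    [NormedAddCommGroup E₂] [NormedSpace ℝ E₂] [CompleteSpace E₂]
    (θ p : ℝ) (hp : p ∈ Set.Ico (0:ℝ) 1) (f : E₁ → E₂)
    (hf : ∀ x y : E₁, ‖f (x + y) - f x - f y‖ ≤ θ * (‖x‖ ^ p + ‖y‖ ^ p)) :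
    ∃! L : E₁ → E₂,
      (∀ x y : E₁, L (x + y) = L x + L y) ∧
      (∀ x : E₁, ‖f x - L x‖ ≤ 2 * θ / (2 - 2 ^ p) * ‖x‖ ^ p) := by
  have hcauchy : ∀ x, CauchySeq (hyersSeq f x) := fun x =>
    cauchySeq_of_le_geometric _ _ (two_rpow_div_two_lt_one hp.2) (dist_hyersSeq_succ_le hf x)
  choose L hL using fun x => cauchySeq_tendsto_of_complete (hcauchy x)
  refine ⟨L, ⟨map_add_of_tendsto_hyersSeq hf hp.2 hL,
    fun x => norm_sub_le_of_tendsto_hyersSeq hf hp.2 (hL x)⟩, ?_⟩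
  rintro L' ⟨hL'_add, hL'_near⟩
  funext x
  exact tendsto_nhds_unique (tendsto_hyersSeq_of_norm_sub_le hL'_add hp.2 hL'_near x) (hL x)

/-- Rassias' theorem: if `f : E₁ → E₂` between real Banach spaces satisfies
`‖f(x+y) - f x - f y‖ ≤ θ(‖x‖^p + ‖y‖^p)` with `θ > 0` and `0 ≤ p < 1`, then
there is a unique additive `L` with `‖f x - L x‖ ≤ (2θ/(2 - 2^p))‖x‖^p`. -/
theorem rassias_stability
    {E₁ E₂ : Type*} [NormedAddCommGroup E₁] [NormedSpace ℝ E₁] [CompleteSpace E₁]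
    [NormedAddCommGroup E₂] [NormedSpace ℝ E₂] [CompleteSpace E₂]
    (θ p : ℝ) (hθ : 0 < θ) (hp : p ∈ Set.Ico (0:ℝ) 1) (f : E₁ → E₂)
    (hf : ∀ x y : E₁, ‖f (x + y) - f x - f y‖ ≤ θ * (‖x‖ ^ p + ‖y‖ ^ p)) :
    ∃! L : E₁ → E₂,
      (∀ x y : E₁, L (x + y) = L x + L y) ∧
      (∀ x : E₁, ‖f x - L x‖ ≤ 2 * θ / (2 - 2 ^ p) * ‖x‖ ^ p) :=
  rassias_stability_general θ p hp f hf
end
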